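/- arXiv:2410.00861 — 3 statements merged into one kernel-verified Lean document; each statement's English description precedes it below -/
import Mathlib

section
/- Let φ:(0,∞)→(0,∞) be C¹ and let Φ(t)=∫₀^{|t|} sφ(s)ds. Fix 1<q<p. If the map t ↦ ((2−q)φ(t)+φ'(t)t)/t^{p−2} is strictly decreasing on (0,∞), then the map t ↦ (φ(t)t² − qΦ(t))/t^p is strictly decreasing on (0,∞). -/
/-!
Write `N(t) = φ(t)t² − qΦ(t)` and `H(t) = ((2−q)φ(t) + φ'(t)t)/t^{p−2}`, so that
`N'(t) = H(t)t^{p−1}` and `N(0+) = 0`. For fixed `t`, the function `s ↦ N(s) − H(t)s^p/p` has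
derivative `(H(s) − H(t))s^{p−1} > 0` on `(0, t)` and vanishes at `0+`, hence `H(t)t^p < pN(t)`.
This is exactly the negativity of `(N/t^p)' = t^{p−1}(H(t)t^p − pN(t))/t^{2p}`.
-/

open Set Filter Topology MeasureTheory

theorem continuousOn_update_Ici_of_tendsto {X : Type*} [TopologicalSpace X] {f : ℝ → X} {a : ℝ}
    {L : X} (hf : ContinuousOn f (Ioi a)) (hL : Tendsto f (𝓝[>] a) (𝓝 L)) :
    ContinuousOn (Function.update f a L) (Ici a) := by
  intro x hx
  rcases (mem_Ici.mp hx).eq_or_lt with rfl | hax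
  · rwa [continuousWithinAt_update_same, Ici_sdiff_left]
  · have hfx : ContinuousAt f x := hf.continuousAt (Ioi_mem_nhds hax)
    refine (hfx.congr ?_).continuousWithinAt
    filter_upwards [Ioi_mem_nhds hax] with y hy
    exact (Function.update_of_ne hy.ne' _ _).symm

section Primitive

variable {E : Type*} [NormedAddCommGroup E] {f : ℝ → E} {a : ℝ} {L : E}

theorem intervalIntegrable_of_tendsto_nhdsGT (hf : ContinuousOn f (Ioi a))
    (hL : Tendsto f (𝓝[>] a) (𝓝 L)) {b : ℝ} (hab : a ≤ b) : IntervalIntegrable f volume a b := by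
  have hcont : ContinuousOn (Function.update f a L) (uIcc a b) :=
    (continuousOn_update_Ici_of_tendsto hf hL).mono fun x hx => by
      rw [uIcc_of_le hab] at hx; exact hx.1
  refine hcont.intervalIntegrable.congr_uIoo fun x hx => ?_
  rw [uIoo_of_le hab] at hx
  exact Function.update_of_ne hx.1.ne' _ _

variable [NormedSpace ℝ E]

theorem tendsto_integral_nhdsGT_of_tendsto (hf : ContinuousOn f (Ioi a))
    (hL : Tendsto f (𝓝[>] a) (𝓝 L)) :
    Tendsto (fun x => ∫ s in a..x, f s) (𝓝[>] a) (𝓝 0) := by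
  have hb : a ≤ a + 1 := by linarith
  have hcont := intervalIntegral.continuousOn_primitive_interval'
    (intervalIntegrable_of_tendsto_nhdsGT hf hL hb) left_mem_uIcc a left_mem_uIcc
  rw [uIcc_of_le hb] at hcont
  have := hcont.mono_of_mem_nhdsWithin (Icc_mem_nhdsGT (by linarith))
  rwa [ContinuousWithinAt, intervalIntegral.integral_same] at this

theorem hasDerivAt_integral_of_tendsto_nhdsGT [CompleteSpace E] (hf : ContinuousOn f (Ioi a))
    (hL : Tendsto f (𝓝[>] a) (𝓝 L)) {t : ℝ} (ht : a < t) :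
    HasDerivAt (fun x => ∫ s in a..x, f s) (f t) t :=
  intervalIntegral.integral_hasDerivAt_right (intervalIntegrable_of_tendsto_nhdsGT hf hL ht.le)
    (hf.stronglyMeasurableAtFilter isOpen_Ioi t ht) (hf.continuousAt (Ioi_mem_nhds ht))

end Primitive

theorem StrictMonoOn.pos_of_tendsto_nhdsGT {M : ℝ → ℝ} {a b : ℝ} (hM : StrictMonoOn M (Ioc a b))
    (hab : a < b) (h0 : Tendsto M (𝓝[>] a) (𝓝 0)) : 0 < M b := by
  have hc : (a + b) / 2 ∈ Ioc a b := ⟨by linarith, by linarith⟩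
  have hMc : 0 ≤ M ((a + b) / 2) := by
    refine le_of_tendsto h0 ?_
    filter_upwards [Ioo_mem_nhdsGT hc.1] with s hs
    exact (hM ⟨hs.1, hs.2.le.trans hc.2⟩ hc hs.2).le
  exact hMc.trans_lt (hM hc ⟨hab, le_rfl⟩ (by linarith))

section RpowComparison

variable {N H : ℝ → ℝ} {p : ℝ}

theorem mul_rpow_lt_of_hasDerivAt (hp : 0 < p) (hN : ∀ t > 0, HasDerivAt N (H t * t ^ (p - 1)) t)
    (hN0 : Tendsto N (𝓝[>] 0) (𝓝 0)) (hH : StrictAntiOn H (Ioi 0)) {t : ℝ} (ht : 0 < t) :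
    H t * t ^ p < p * N t := by
  set M : ℝ → ℝ := fun s => N s - H t * s ^ p / p
  have hM : ∀ s > 0, HasDerivAt M ((H s - H t) * s ^ (p - 1)) s := by
    intro s hs
    refine ((hN s hs).sub (((Real.hasDerivAt_rpow_const (p := p) (Or.inl hs.ne')).const_mul
      (H t)).div_const p)).congr_deriv ?_
    field_simp
  have hMmono : StrictMonoOn M (Ioc 0 t) := by
    refine strictMonoOn_of_hasDerivWithinAt_pos (convex_Ioc 0 t)
      (fun s hs => (hM s hs.1).continuousAt.continuousWithinAt)
      (fun s hs => (hM s ?_).hasDerivWithinAt) fun s hs => ?_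
    · rw [interior_Ioc] at hs; exact hs.1
    · rw [interior_Ioc] at hs
      exact mul_pos (sub_pos.mpr (hH hs.1 ht hs.2)) (Real.rpow_pos_of_pos hs.1 _)
  have hpow : Tendsto (fun s : ℝ => s ^ p) (𝓝[>] 0) (𝓝 0) := by
    simpa [Real.zero_rpow hp.ne'] using
      ((Real.continuousAt_rpow_const 0 p (Or.inr hp.le)).tendsto).mono_left nhdsWithin_le_nhds
  have hM0 : Tendsto M (𝓝[>] 0) (𝓝 0) := by
    simpa using hN0.sub ((hpow.const_mul (H t)).div_const p)
  have := hMmono.pos_of_tendsto_nhdsGT ht hM0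
  simp only [M, sub_pos, div_lt_iff₀ hp] at this
  linarith

theorem strictAntiOn_div_rpow_of_hasDerivAt (hp : 0 < p)
    (hN : ∀ t > 0, HasDerivAt N (H t * t ^ (p - 1)) t)
    (hN0 : Tendsto N (𝓝[>] 0) (𝓝 0)) (hH : StrictAntiOn H (Ioi 0)) :
    StrictAntiOn (fun t => N t / t ^ p) (Ioi 0) := by
  have hderiv : ∀ t > 0, HasDerivAt (fun t => N t / t ^ p)
      (t ^ (p - 1) * (H t * t ^ p - p * N t) / (t ^ p) ^ 2) t := fun t ht => by
    refine ((hN t ht).div (Real.hasDerivAt_rpow_const (Or.inl ht.ne'))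
      (Real.rpow_pos_of_pos ht p).ne').congr_deriv ?_
    ring
  refine strictAntiOn_of_hasDerivWithinAt_neg (convex_Ioi 0)
    (fun t ht => (hderiv t ht).continuousAt.continuousWithinAt)
    (fun t ht => (hderiv t (interior_Ioi.subset ht)).hasDerivWithinAt) fun t ht => ?_
  rw [interior_Ioi] at ht
  have hlt := mul_rpow_lt_of_hasDerivAt hp hN hN0 hH ht
  have hpos := Real.rpow_pos_of_pos ht
  exact div_neg_of_neg_of_pos (mul_neg_of_pos_of_neg (hpos _) (by linarith))
    (pow_pos (hpos _) 2)

end RpowComparison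

theorem stmt1_general (φ φ' Φ : ℝ → ℝ) (q p : ℝ)
    (hq : 1 < q) (hqp : q < p)
    (hderiv : ∀ t > 0, HasDerivAt φ (φ' t) t)
    (hzero : Filter.Tendsto (fun t => t * φ t) (nhdsWithin 0 (Set.Ioi 0)) (nhds 0))
    (hΦ : ∀ t : ℝ, Φ t = ∫ s in (0 : ℝ)..|t|, s * φ s)
    (hdec : StrictAntiOn (fun t => ((2 - q) * φ t + φ' t * t) / t ^ (p - 2)) (Set.Ioi 0)) :
    StrictAntiOn (fun t => (φ t * t ^ 2 - q * Φ t) / t ^ p) (Set.Ioi 0) := by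
  have hcont : ContinuousOn (fun s => s * φ s) (Ioi 0) := fun t ht =>
    (continuousAt_id.mul (hderiv t ht).continuousAt).continuousWithinAt
  have hΦ_eq : EqOn Φ (fun x => ∫ s in (0 : ℝ)..x, s * φ s) (Ioi 0) := fun x hx => by
    rw [hΦ x, abs_of_pos hx]
  have hΦ_deriv : ∀ t > 0, HasDerivAt Φ (t * φ t) t := fun t ht =>
    (hasDerivAt_integral_of_tendsto_nhdsGT hcont hzero ht).congr_of_eventuallyEq
      (eventually_of_mem (Ioi_mem_nhds ht) hΦ_eq)
  have hΦ0 : Tendsto Φ (𝓝[>] 0) (𝓝 0) :=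
    (tendsto_integral_nhdsGT_of_tendsto hcont hzero).congr' (eventually_of_mem self_mem_nhdsWithin
      fun x hx => (hΦ_eq hx).symm)
  refine strictAntiOn_div_rpow_of_hasDerivAt (by linarith) (fun t ht => ?_) ?_ hdec
  · refine (((hderiv t ht).mul (hasDerivAt_pow 2 t)).sub
      ((hΦ_deriv t ht).const_mul q)).congr_deriv ?_
    rw [show p - 1 = p - 2 + 1 by ring, Real.rpow_add ht, Real.rpow_one]
    field_simp [(Real.rpow_pos_of_pos ht (p - 2)).ne']
    ring
  · have hφt_sq : Tendsto (fun t => t * φ t * t) (𝓝[>] 0) (𝓝 0) := by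
      simpa using hzero.mul (tendsto_nhdsWithin_of_tendsto_nhds tendsto_id)
    simpa [mul_comm, mul_left_comm, sq] using hφt_sq.sub (hΦ0.const_mul q)

/-- If `t ↦ ((2-q)φ(t) + φ'(t)t)/t^{p-2}` is strictly decreasing on `(0,∞)`,
then `t ↦ (φ(t)t² - q Φ(t))/t^p` is strictly decreasing on `(0,∞)`, where
`Φ(t) = ∫₀^{|t|} s φ(s) ds` and `1 < q < p`. -/
theorem stmt1 (φ φ' Φ : ℝ → ℝ) (q p : ℝ)
    (hq : 1 < q) (hqp : q < p)
    (hφpos : ∀ t > 0, 0 < φ t)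
    (hderiv : ∀ t > 0, HasDerivAt φ (φ' t) t)
    (hzero : Filter.Tendsto (fun t => t * φ t) (nhdsWithin 0 (Set.Ioi 0)) (nhds 0))
    (hΦ : ∀ t : ℝ, Φ t = ∫ s in (0 : ℝ)..|t|, s * φ s)
    (hdec : StrictAntiOn (fun t => ((2 - q) * φ t + φ' t * t) / t ^ (p - 2)) (Set.Ioi 0)) :
    StrictAntiOn (fun t => (φ t * t ^ 2 - q * Φ t) / t ^ p) (Set.Ioi 0) :=
  stmt1_general φ φ' Φ q p hq hqp hderiv hzero hΦ hdec
end

section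
/- Let J_λ(u)=∫_Ω Φ(|∇u|)dx − (λ/q)∫_Ω a|u|^q dx − (1/p)∫_Ω |u|^p dx on W_0^{1,Φ}(Ω), with 1<q<ℓ≤m<p, ℓΦ(t)≤φ(t)t²≤mΦ(t), the Fukagai estimates c₁‖u‖^ℓ ≤ ∫_Ω Φ(|∇u|)dx for ‖u‖≥1, and a continuous embedding W_0^{1,Φ}(Ω)↪L^q(Ω). Then J_λ restricted to the Nehari set N_λ = {u≠0 : J_λ'(u)u=0} is coercive: J_λ(u)→∞ as ‖u‖→∞ with u∈N_λ. -/
/-- coercivity of `J_λ` on the Nehari set. Abstractly,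
`J u = IΦ u - (λ/q) Nq u - (1/p) Np u`, the Nehari constraint is
`Iφ u = λ Nq u + Np u`, with `ℓ IΦ u ≤ Iφ u ≤ m IΦ u`,
`c₁ ‖u‖^ℓ ≤ IΦ u` for `‖u‖ ≥ 1`, and `Nq u ≤ Cq ‖u‖^q` (embedding into `L^q`).
Then `J` is coercive on the Nehari set. -/
theorem stmt11 {E : Type*} [NormedAddCommGroup E]
    (IΦ Iφ Nq Np : E → ℝ) (lam q ℓ m p c₁ Cq : ℝ)
    (hq : 1 < q) (hqℓ : q < ℓ) (hℓm : ℓ ≤ m) (hmp : m < p)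
    (hlam : 0 < lam) (hc₁ : 0 < c₁) (hCq : 0 < Cq)
    (hℓIΦ : ∀ u : E, ℓ * IΦ u ≤ Iφ u)
    (hmIΦ : ∀ u : E, Iφ u ≤ m * IΦ u)
    (hIΦlow : ∀ u : E, 1 ≤ ‖u‖ → c₁ * ‖u‖ ^ ℓ ≤ IΦ u)
    (hNq : ∀ u : E, 0 ≤ Nq u ∧ Nq u ≤ Cq * ‖u‖ ^ q)
    (hNp : ∀ u : E, 0 ≤ Np u) :
    ∀ M : ℝ, ∃ R : ℝ, ∀ u : E, u ≠ 0 →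
      Iφ u = lam * Nq u + Np u → R ≤ ‖u‖ →
      M ≤ IΦ u - lam / q * Nq u - 1 / p * Np u := by
  intro M
  have hp : 0 < p := by linarith
  have hq0 : 0 < q := by linarith
  have hmp1 : 0 < 1 - m / p := by
    have : m / p < 1 := (div_lt_one hp).2 hmp
    linarith
  set A : ℝ := (1 - m / p) * c₁ with hAdef
  have hA : 0 < A := mul_pos hmp1 hc₁
  have hqp : 0 < 1 / q - 1 / p := by
    have : 1 / p < 1 / q := one_div_lt_one_div_of_lt hq0 (by linarith)
    linarith
  set B : ℝ := lam * (1 / q - 1 / p) * Cq with hBdef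
  have hB : 0 < B := mul_pos (mul_pos hlam hqp) hCq
  set e : ℝ := ℓ - q with hedef
  have he : 0 < e := by simp only [hedef]; linarith
  set K : ℝ := (B + max M 1) / A with hKdef
  have hKpos : 0 < K := div_pos (by have := le_max_right M 1; linarith) hA
  refine ⟨max 1 (K ^ (1 / e)), fun u _ hNeh hR => ?_⟩
  set r : ℝ := ‖u‖ with hrdef
  have h1r : 1 ≤ r := le_trans (le_max_left _ _) hR
  have hrpos : 0 < r := by linarith
  have hKr : K ^ (1 / e) ≤ r := le_trans (le_max_right _ _) hR
  have hKre : K ≤ r ^ e := by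
    have h1 : (K ^ (1 / e)) ^ e ≤ r ^ e :=
      Real.rpow_le_rpow (Real.rpow_nonneg hKpos.le _) hKr he.le
    rwa [← Real.rpow_mul hKpos.le, one_div_mul_cancel he.ne', Real.rpow_one] at h1
  -- the key lower bound on J
  have hIΦ := hIΦlow u h1r
  have hNq2 := (hNq u).2
  have hmI := hmIΦ u
  have t1 : 0 ≤ (1 / p) * (m * IΦ u - Iφ u) :=
    mul_nonneg (by positivity) (by linarith)
  have t2 : 0 ≤ lam * (1 / q - 1 / p) * (Cq * r ^ q - Nq u) :=
    mul_nonneg (mul_pos hlam hqp).le (by linarith)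
  have t3 : 0 ≤ (1 - m / p) * (IΦ u - c₁ * r ^ ℓ) :=
    mul_nonneg hmp1.le (by linarith)
  have hNpval : Np u = Iφ u - lam * Nq u := by linarith
  have e1 : A * r ^ ℓ - B * r ^ q ≤ IΦ u - lam / q * Nq u - 1 / p * Np u := by
    have key : IΦ u - lam / q * Nq u - 1 / p * (Iφ u - lam * Nq u) -
        (A * r ^ ℓ - B * r ^ q) =
        1 / p * (m * IΦ u - Iφ u) + lam * (1 / q - 1 / p) * (Cq * r ^ q - Nq u) +
        (1 - m / p) * (IΦ u - c₁ * r ^ ℓ) := by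
      rw [hAdef, hBdef]
      field_simp
      ring
    rw [hNpval]
    linarith [key, t1, t2, t3]
  -- split r^ℓ
  have hrl : r ^ ℓ = r ^ q * r ^ e := by
    rw [← Real.rpow_add hrpos]
    congr 1
    simp [hedef]
  have hrq1 : 1 ≤ r ^ q := Real.one_le_rpow h1r hq0.le
  have hAe : max M 1 ≤ A * r ^ e - B := by
    have : A * K = B + max M 1 := by
      rw [hKdef]; field_simp
    linarith [mul_le_mul_of_nonneg_left hKre hA.le]
  have e2 : M ≤ A * r ^ ℓ - B * r ^ q := by
    have h0 : 0 ≤ A * r ^ e - B := le_trans (by have := le_max_right M 1; linarith) hAe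
    have : 1 * max M 1 ≤ r ^ q * (A * r ^ e - B) :=
      mul_le_mul hrq1 hAe (le_trans zero_le_one (le_max_right M 1)) (by positivity)
    have hM : M ≤ max M 1 := le_max_left _ _
    have expand : A * r ^ ℓ - B * r ^ q = r ^ q * (A * r ^ e - B) := by
      rw [hrl]; ring
    linarith [this]
  linarith
end

section
/- In the setting of the paper, with t_n(u) the unique maximizer of t↦R_n(tu) and using (p−m)/(p−q)·∫_Ω φ(|t_n(u)∇u|)|t_n(u)∇u|²dx ≤ numerator of R_n(t_n(u)u), together with ℓΦ(t)≤φ(t)t², ζ₀(‖v‖) ≤ ∫_Ω Φ(|∇v|)dx, Hölder's inequality ‖v‖_{q,a}^q ≤ ‖a‖_{ℓ/(ℓ−q)}‖v‖_ℓ^q, the embedding ‖v‖_ℓ ≤ S_ℓ‖v‖, and the lower bound ‖t_n(u)u‖ ≥ c > 0, one obtains the uniform lower bound Λ_n(u) ≥ ℓ(p−m)/(S_ℓ^q(p−q)‖a‖_{ℓ/(ℓ−q)})·min{c^{ℓ−q}, c^{m−q}} > 0 for all u≠0. In particular λ* = inf_{u≠0} Λ_n(u) > 0. -/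
/-- uniform positive lower bound for `Λ_n` and positivity of `λ*`.
Abstractly on a normed space: `Iφ v = ∫_Ω φ(|∇v|)|∇v|²`, `IΦ v = ∫_Ω Φ(|∇v|)`,
`Np v = ‖v‖_p^p`, `Nqa v = ‖v‖_{q,a}^q`, `Nl v = ‖v‖_ℓ`; `tn u` is the maximizer of
`t ↦ R_n(tu)`, and `Λ_n(u) = R_n(tn u • u) = (Iφ(tn u • u) - Np(tn u • u))/Nqa(tn u • u)`.
With `(p-m)/(p-q) Iφ(tn u • u) ≤ Iφ(tn u • u) - Np(tn u • u)`, `ℓ IΦ v ≤ Iφ v`,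
`min{‖v‖^ℓ,‖v‖^m} ≤ IΦ v`, Hölder `Nqa v ≤ ‖a‖ (Nl v)^q`, embedding `Nl v ≤ S_ℓ ‖v‖`,
and `‖tn u • u‖ ≥ c > 0`, one gets
`Λ_n(u) ≥ ℓ(p-m)/(S_ℓ^q (p-q) ‖a‖) min{c^{ℓ-q}, c^{m-q}} > 0` for all `u ≠ 0`;
in particular `λ* = inf_{u≠0} Λ_n(u) > 0`. -/
theorem stmt15 {E : Type*} [NormedAddCommGroup E] [Module ℝ E]
    (Iφ IΦ Np Nqa Nl : E → ℝ) (tn : E → ℝ) (q ℓ m p Sl normA c : ℝ)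
    (hq : 1 < q) (hqℓ : q < ℓ) (hℓm : ℓ ≤ m) (hmp : m < p)
    (hSl : 0 < Sl) (hnormA : 0 < normA) (hc : 0 < c)
    (htn_pos : ∀ u : E, u ≠ 0 → 0 < tn u)
    (hnum : ∀ u : E, u ≠ 0 →
      (p - m) / (p - q) * Iφ (tn u • u) ≤ Iφ (tn u • u) - Np (tn u • u))
    (hℓIΦ : ∀ v : E, ℓ * IΦ v ≤ Iφ v)
    (hIΦlow : ∀ v : E, min (‖v‖ ^ ℓ) (‖v‖ ^ m) ≤ IΦ v)
    (hHolder : ∀ v : E, Nqa v ≤ normA * Nl v ^ q)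
    (hNqa_pos : ∀ v : E, v ≠ 0 → 0 < Nqa v)
    (hNl : ∀ v : E, 0 ≤ Nl v ∧ Nl v ≤ Sl * ‖v‖)
    (hdist : ∀ u : E, u ≠ 0 → c ≤ ‖tn u • u‖) :
    0 < ℓ * (p - m) / (Sl ^ q * (p - q) * normA) * min (c ^ (ℓ - q)) (c ^ (m - q)) ∧
    ∀ u : E, u ≠ 0 →
      ℓ * (p - m) / (Sl ^ q * (p - q) * normA) * min (c ^ (ℓ - q)) (c ^ (m - q)) ≤
        (Iφ (tn u • u) - Np (tn u • u)) / Nqa (tn u • u) := by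

  have hℓ0 : (0:ℝ) < ℓ := lt_trans (lt_trans one_pos hq) hqℓ
  have hpm : 0 < p - m := sub_pos.2 hmp
  have hqm : q < m := lt_of_lt_of_le hqℓ hℓm
  have hpq : 0 < p - q := sub_pos.2 (hqm.trans hmp)
  have hSlq : 0 < Sl ^ q := Real.rpow_pos_of_pos hSl q
  have hM : 0 < min (c ^ (ℓ - q)) (c ^ (m - q)) :=
    lt_min (Real.rpow_pos_of_pos hc _) (Real.rpow_pos_of_pos hc _)
  have hK : 0 < ℓ * (p - m) / (Sl ^ q * (p - q) * normA) :=
    div_pos (mul_pos hℓ0 hpm) (mul_pos (mul_pos hSlq hpq) hnormA)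
  refine ⟨mul_pos hK hM, fun u hu => ?_⟩
  set v := tn u • u with hv
  have hcv : c ≤ ‖v‖ := hdist u hu
  have hv0 : v ≠ 0 := by
    intro h; rw [h, norm_zero] at hcv; exact absurd hcv (not_le.2 hc)
  have ht0 : 0 < ‖v‖ := lt_of_lt_of_le hc hcv
  have hNqa : 0 < Nqa v := hNqa_pos v hv0
  rw [le_div_iff₀ hNqa]
  obtain ⟨hNl0, hNlle⟩ := hNl v
  have hq0 : (0:ℝ) ≤ q := by linarith
  have h1 : Nqa v ≤ normA * Sl ^ q * ‖v‖ ^ q := by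
    calc Nqa v ≤ normA * Nl v ^ q := hHolder v
    _ ≤ normA * (Sl * ‖v‖) ^ q := by
        have := Real.rpow_le_rpow hNl0 hNlle hq0
        nlinarith
    _ = normA * Sl ^ q * ‖v‖ ^ q := by
        rw [Real.mul_rpow hSl.le (norm_nonneg v), mul_assoc]
  have hvq : (0:ℝ) < ‖v‖ ^ q := Real.rpow_pos_of_pos ht0 q
  have h2 : min (c ^ (ℓ - q)) (c ^ (m - q)) * ‖v‖ ^ q ≤ min (‖v‖ ^ ℓ) (‖v‖ ^ m) := by
    have ha : c ^ (ℓ - q) * ‖v‖ ^ q ≤ ‖v‖ ^ ℓ := by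
      calc c ^ (ℓ - q) * ‖v‖ ^ q ≤ ‖v‖ ^ (ℓ - q) * ‖v‖ ^ q := by
            have := Real.rpow_le_rpow hc.le hcv (by linarith : (0:ℝ) ≤ ℓ - q)
            nlinarith
      _ = ‖v‖ ^ ℓ := by rw [← Real.rpow_add ht0]; ring_nf
    have hb : c ^ (m - q) * ‖v‖ ^ q ≤ ‖v‖ ^ m := by
      calc c ^ (m - q) * ‖v‖ ^ q ≤ ‖v‖ ^ (m - q) * ‖v‖ ^ q := by
            have := Real.rpow_le_rpow hc.le hcv (by linarith : (0:ℝ) ≤ m - q)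
            nlinarith
      _ = ‖v‖ ^ m := by rw [← Real.rpow_add ht0]; ring_nf
    refine le_min (le_trans ?_ ha) (le_trans ?_ hb)
    · exact mul_le_mul_of_nonneg_right (min_le_left _ _) hvq.le
    · exact mul_le_mul_of_nonneg_right (min_le_right _ _) hvq.le
  have h3 : min (‖v‖ ^ ℓ) (‖v‖ ^ m) ≤ IΦ v := hIΦlow v
  have h4 : ℓ * IΦ v ≤ Iφ v := hℓIΦ v
  have h5 : (p - m) / (p - q) * Iφ v ≤ Iφ v - Np v := hnum u hu
  set M := min (c ^ (ℓ - q)) (c ^ (m - q)) with hMdef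
  calc ℓ * (p - m) / (Sl ^ q * (p - q) * normA) * M * Nqa v
      ≤ ℓ * (p - m) / (Sl ^ q * (p - q) * normA) * M * (normA * Sl ^ q * ‖v‖ ^ q) :=
        mul_le_mul_of_nonneg_left h1 (mul_pos hK hM).le
    _ = ℓ * (p - m) / (p - q) * (M * ‖v‖ ^ q) := by field_simp
    _ ≤ ℓ * (p - m) / (p - q) * min (‖v‖ ^ ℓ) (‖v‖ ^ m) :=
        mul_le_mul_of_nonneg_left h2 (by positivity)
    _ ≤ ℓ * (p - m) / (p - q) * IΦ v :=
        mul_le_mul_of_nonneg_left h3 (by positivity)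
    _ = (p - m) / (p - q) * (ℓ * IΦ v) := by ring
    _ ≤ (p - m) / (p - q) * Iφ v := mul_le_mul_of_nonneg_left h4 (by positivity)
    _ ≤ Iφ v - Np v := h5
end
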